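/- Averaging conjugation by U ⊗ U over the Haar measure on the unitary group of a d-dimensional space A sends any operator Y on A ⊗ A to α·I + β·F, where the scalars satisfy α d² + β d = Tr[Y] and α d + β d² = Tr[Y F]. -/

import Mathlib

open scoped Kronecker
open Matrix MeasureTheory
open scoped ComplexOrder
open scoped ENNReal

noncomputable section

instance matMeasurableSpace {n m : Type*} : MeasurableSpace (Matrix n m ℂ) :=
  inferInstanceAs (MeasurableSpace (n → m → ℂ))

instance unitaryMeasurableSpace {n : Type*} [Fintype n] [DecidableEq n] :
    MeasurableSpace (Matrix.unitaryGroup n ℂ) :=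
  inferInstanceAs (MeasurableSpace {U : Matrix n n ℂ // U ∈ Matrix.unitaryGroup n ℂ})

variable {n : Type*} [Fintype n] [DecidableEq n]

/-- Functional calculus for Hermitian matrices (junk value `0` otherwise). -/
def hfun (f : ℝ → ℝ) (X : Matrix n n ℂ) : Matrix n n ℂ :=
  if hX : X.IsHermitian then
    (hX.eigenvectorUnitary : Matrix n n ℂ) *
      Matrix.diagonal (fun i => (f (hX.eigenvalues i) : ℂ)) *
      (star (hX.eigenvectorUnitary : Matrix n n ℂ))
  else 0

/-- Real matrix power via spectral calculus, with the pseudo-inverse convention `0 ^ t = 0`. -/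
def mpow (X : Matrix n n ℂ) (t : ℝ) : Matrix n n ℂ :=
  hfun (fun x => if x = 0 then 0 else Real.rpow x t) X

/-- Matrix logarithm on the support. -/
def mlog (X : Matrix n n ℂ) : Matrix n n ℂ :=
  hfun (fun x => if x = 0 then 0 else Real.log x) X

/-- Trace norm (Schatten 1-norm). -/
def traceNorm (X : Matrix n n ℂ) : ℝ :=
  (((Matrix.posSemidef_conjTranspose_mul_self X).1.eigenvectorUnitary : Matrix n n ℂ) *
    Matrix.diagonal (((↑) : ℝ → ℂ) ∘ (√·) ∘ (Matrix.posSemidef_conjTranspose_mul_self X).1.eigenvalues) *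
    (star ((Matrix.posSemidef_conjTranspose_mul_self X).1.eigenvectorUnitary : Matrix n n ℂ))).trace.re

/-- Squared Hilbert–Schmidt (Schatten 2) norm. -/
def hsNormSq (X : Matrix n n ℂ) : ℝ := ∑ i, ∑ j, ‖X i j‖ ^ 2

/-- Operator norm (Schatten ∞-norm): square root of the top eigenvalue of `Xᴴ * X`. -/
def opNorm (X : Matrix n n ℂ) : ℝ :=
  ⨆ i, Real.sqrt ((Matrix.posSemidef_conjTranspose_mul_self X).1.eigenvalues i)

/-- Schatten `α`-norm for real `α`. -/
def schattenR (α : ℝ) (X : Matrix n n ℂ) : ℝ :=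
  ((mpow (Xᴴ * X) (α / 2)).trace.re) ^ (1 / α)

/-- Partial trace over the first tensor factor. -/
def ptrFst {a b : Type*} [Fintype a] (X : Matrix (a × b) (a × b) ℂ) : Matrix b b ℂ :=
  Matrix.of fun j j' => ∑ i, X (i, j) (i, j')

/-- A density operator. -/
def IsDensity (X : Matrix n n ℂ) : Prop := X.PosSemidef ∧ X.trace = 1

/-- Swap (flip) operator on `A ⊗ A`. -/
def swapM (a : Type*) [Fintype a] [DecidableEq a] : Matrix (a × a) (a × a) ℂ :=
  Matrix.of fun p q => if p.1 = q.2 ∧ p.2 = q.1 then 1 else 0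

/-- Normalized maximally entangled state `Φ = (1/d) Σ_{i j} |ii⟩⟨jj|`. -/
def phiM (a : Type*) [Fintype a] [DecidableEq a] : Matrix (a × a) (a × a) ℂ :=
  Matrix.of fun p q => if p.1 = p.2 ∧ q.1 = q.2 then ((Fintype.card a : ℂ))⁻¹ else 0

/-- Non-normalized maximally entangled operator `Φ̃ = Σ_{i j} |ii⟩⟨jj|`. -/
def phiTilde (a : Type*) [Fintype a] [DecidableEq a] : Matrix (a × a) (a × a) ℂ :=
  Matrix.of fun p q => if p.1 = p.2 ∧ q.1 = q.2 then 1 else 0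

/-- Entrywise integral of a matrix-valued function. -/
def mInt {G : Type*} [MeasurableSpace G] (μ : Measure G)
    (f : G → Matrix n n ℂ) : Matrix n n ℂ :=
  Matrix.of fun i j => ∫ x, f x i j ∂μ

/-- Choi state (normalized Choi–Jamiołkowski matrix) of a map `T`, on `A' ⊗ C`. -/
def choiM {a c : Type*} [Fintype a] [DecidableEq a]
    (T : Matrix a a ℂ → Matrix c c ℂ) : Matrix (a × c) (a × c) ℂ :=
  Matrix.of fun p q =>
    ((Fintype.card a : ℂ))⁻¹ * (T (Matrix.single p.1 q.1 1)) p.2 q.2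

/-- The extension `T ⊗ id_E` of a map `T : B(A) → B(C)` applied to an operator on `A ⊗ E`. -/
def tensorExt {a c e : Type*} [Fintype a] [DecidableEq a]
    (T : Matrix a a ℂ → Matrix c c ℂ) (ρ : Matrix (a × e) (a × e) ℂ) :
    Matrix (c × e) (c × e) ℂ :=
  Matrix.of fun p q => ∑ i, ∑ j,
    (T (Matrix.single i j 1)) p.1 q.1 * ρ (i, p.2) (j, q.2)

/-- `T` is trace preserving. -/
def IsTracePreserving {a c : Type*} [Fintype a] [Fintype c]
    (T : Matrix a a ℂ → Matrix c c ℂ) : Prop :=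
  ∀ X, (T X).trace = X.trace

/-- The decoupling map `Θ(Y)(U) = d² ⟨Φ_{A'A}| (1 ⊗ U ⊗ 1) Y (1 ⊗ U† ⊗ 1) |Φ_{A'A}⟩`,
where `Y` is an operator on `A' ⊗ A ⊗ R` (with `R` e.g. `C ⊗ E`). -/
def Theta {a r : Type*} [Fintype a] [DecidableEq a] [Fintype r] [DecidableEq r]
    (Y : Matrix ((a × a) × r) ((a × a) × r) ℂ) (U : Matrix.unitaryGroup a ℂ) :
    Matrix r r ℂ :=
  (Fintype.card a : ℂ) • Matrix.of fun x y => ∑ i, ∑ j,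
    ((((1 : Matrix a a ℂ) ⊗ₖ (U : Matrix a a ℂ)) ⊗ₖ (1 : Matrix r r ℂ)) * Y *
      ((((1 : Matrix a a ℂ) ⊗ₖ (U : Matrix a a ℂ)) ⊗ₖ (1 : Matrix r r ℂ))ᴴ)) ((i, i), x) ((j, j), y)

/-- The completely depolarizing map acting on the `A` factor of `A' ⊗ A ⊗ R`. -/
def depolA {a r : Type*} [Fintype a] [DecidableEq a]
    (Y : Matrix ((a × a) × r) ((a × a) × r) ℂ) : Matrix ((a × a) × r) ((a × a) × r) ℂ :=
  Matrix.of fun p q =>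
    if p.1.2 = q.1.2 then
      ((Fintype.card a : ℂ))⁻¹ * ∑ k, Y ((p.1.1, k), p.2) ((q.1.1, k), q.2)
    else 0

/-- Sandwiched Rényi divergence `D*_α(ρ ‖ τ) = (1/(α-1)) log Tr[(τ^{(1-α)/(2α)} ρ τ^{(1-α)/(2α)})^α]`. -/
def sandD {m : Type*} [Fintype m] [DecidableEq m] (α : ℝ) (ρ τ : Matrix m m ℂ) : ℝ :=
  (α - 1)⁻¹ * Real.log
    ((mpow (mpow τ ((1 - α) / (2 * α)) * ρ * mpow τ ((1 - α) / (2 * α))) α).trace.re)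

/-- Sandwiched Rényi conditional entropy
`H*_α(A|B)_ρ = - inf_{σ_B density} D*_α(ρ ‖ 1 ⊗ σ_B)`, conditioning on the second factor. -/
def condSand {a b : Type*} [Fintype a] [DecidableEq a] [Fintype b] [DecidableEq b]
    (α : ℝ) (ρ : Matrix (a × b) (a × b) ℂ) : ℝ :=
  - sInf ((fun σ : Matrix b b ℂ => sandD α ρ ((1 : Matrix a a ℂ) ⊗ₖ σ)) '' {σ | IsDensity σ})

/-- Petz–Rényi conditional entropy
`H_α^↓(A|B)_ρ = (1/(1-α)) log Tr[ρ^α (1 ⊗ ρ_B)^{1-α}]`, conditioning on the second factor. -/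
def petzCond {a b : Type*} [Fintype a] [DecidableEq a] [Fintype b] [DecidableEq b]
    (α : ℝ) (ρ : Matrix (a × b) (a × b) ℂ) : ℝ :=
  (1 - α)⁻¹ * Real.log
    ((mpow ρ α * mpow ((1 : Matrix a a ℂ) ⊗ₖ ptrFst ρ) (1 - α)).trace.re)

/-- Conditional von Neumann entropy `H(A|B)_ρ`. -/
def condVN {a b : Type*} [Fintype a] [DecidableEq a] [Fintype b] [DecidableEq b]
    (ρ : Matrix (a × b) (a × b) ℂ) : ℝ :=
  - ((ρ * (mlog ρ - mlog ((1 : Matrix a a ℂ) ⊗ₖ ptrFst ρ))).trace.re)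

open Equiv

/-!
Left invariance of `μ` makes the twirl commute with every `U ⊗ U`. Conjugating by diagonal
unitaries forces its entry at `((i, j), (k, l))` to vanish unless `(k, l)` is `(i, j)` or `(j, i)`,
conjugating by permutation matrices makes the surviving entries independent of `i` and `j`, and a
single Householder reflection rules out an extra term supported on the entries `((i, i), (i, i))`.
Hence the twirl is `α • 1 + β • F`. Conjugation preserves traces and `F` commutes with `U ⊗ U`,
so taking `Tr` and `Tr (· * F)` of both sides gives the two linear equations.
-/

namespace Matrix

section UnitaryGroup
variable {ι R : Type*} [Fintype ι] [DecidableEq ι] [CommRing R] [StarRing R]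

lemma diagonal_mem_unitaryGroup {d : ι → R} (hd : ∀ i, star (d i) * d i = 1) :
    diagonal d ∈ unitaryGroup ι R := by
  rw [mem_unitaryGroup_iff', star_eq_conjTranspose, diagonal_conjTranspose, diagonal_mul_diagonal]
  exact diagonal_eq_one.mpr (funext hd)

lemma permMatrix_mem_unitaryGroup (σ : Perm ι) : σ.permMatrix R ∈ unitaryGroup ι R := by
  rw [mem_unitaryGroup_iff, star_eq_conjTranspose, conjTranspose_permMatrix, ← permMatrix_mul,
    inv_mul_cancel, permMatrix_one]

lemma one_sub_two_vecMulVec_mem_unitaryGroup {v : ι → R} (hv : star v ⬝ᵥ v = 1) :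
    1 - 2 • vecMulVec v (star v) ∈ unitaryGroup ι R := by
  have hP : vecMulVec v (star v) * vecMulVec v (star v) = vecMulVec v (star v) := by
    rw [vecMulVec_mul_vecMulVec, hv, one_smul]
  rw [mem_unitaryGroup_iff', star_eq_conjTranspose, conjTranspose_sub, conjTranspose_one,
    conjTranspose_smul, conjTranspose_vecMulVec, star_star, star_ofNat, sub_mul, mul_sub, mul_sub,
    one_mul, mul_one, one_mul, smul_mul_smul_comm, hP]
  module

end UnitaryGroup

lemma kronecker_permMatrix {ι κ R : Type*} [DecidableEq ι] [DecidableEq κ] [MulZeroOneClass R]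
    (σ : Perm ι) (τ : Perm κ) :
    σ.permMatrix R ⊗ₖ τ.permMatrix R = Perm.permMatrix R (σ.prodCongr τ) := by
  ext p q
  simp [PEquiv.toMatrix_apply, Prod.ext_iff, ← ite_and, and_comm]

end Matrix

section Swap
variable {a : Type*} [Fintype a] [DecidableEq a]

lemma swapM_eq_toMatrix_prodComm : swapM a = (Equiv.prodComm a a).toPEquiv.toMatrix := by
  ext p q
  simp [swapM, PEquiv.toMatrix_apply, Prod.ext_iff, eq_comm, and_comm]

lemma swapM_mul (Z : Matrix (a × a) (a × a) ℂ) : swapM a * Z = Z.submatrix Prod.swap id := by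
  rw [swapM_eq_toMatrix_prodComm, PEquiv.toMatrix_toPEquiv_mul]
  rfl

lemma mul_swapM (Z : Matrix (a × a) (a × a) ℂ) : Z * swapM a = Z.submatrix id Prod.swap := by
  rw [swapM_eq_toMatrix_prodComm, PEquiv.mul_toMatrix_toPEquiv]
  rfl

lemma swapM_mul_swapM : swapM a * swapM a = 1 := by
  rw [swapM_mul, swapM_eq_toMatrix_prodComm]
  ext p q
  simp [PEquiv.toMatrix_apply, one_apply]

lemma trace_swapM : (swapM a).trace = Fintype.card a := by
  have h (x y : a) : (x = y ∧ y = x) ↔ x = y := ⟨And.left, fun h => ⟨h, h.symm⟩⟩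
  rw [trace, Fintype.sum_prod_type]
  simp [swapM, h]

lemma commute_swapM_kronecker_self (X : Matrix a a ℂ) : Commute (swapM a) (X ⊗ₖ X) := by
  rw [Commute, SemiconjBy, swapM_mul, mul_swapM]
  ext p q
  simp [mul_comm]

end Swap

/-- The product of the two phases at `m` is `I ^ c`, where `c` counts the occurrences of `m`, and
`I ^ 0`, `I ^ 1`, `I ^ 2` are distinct. -/
lemma pair_eq_of_forall_phase_eq {a : Type*} [DecidableEq a] {i j k l : a}
    (h : ∀ m, (if i = m then Complex.I else 1) * (if j = m then Complex.I else 1) =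
      (if k = m then Complex.I else 1) * (if l = m then Complex.I else 1)) :
    (k = i ∧ l = j) ∨ (k = j ∧ l = i) := by
  have hI : Complex.I ≠ 1 := by simp [Complex.ext_iff]
  have hI' : Complex.I ≠ -1 := by simp [Complex.ext_iff]
  have := h i; have := h j; have := h k; have := h l
  grind [Complex.I_mul_I]

section Commutant
variable {a : Type*} [Fintype a] [DecidableEq a] {M : Matrix (a × a) (a × a) ℂ}

lemma apply_eq_zero_of_forall_commute_kronecker
    (hM : ∀ U ∈ unitaryGroup a ℂ, Commute (U ⊗ₖ U) M) {i j k l : a}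
    (hijkl : ¬((k = i ∧ l = j) ∨ (k = j ∧ l = i))) : M (i, j) (k, l) = 0 := by
  by_contra hne
  refine hijkl (pair_eq_of_forall_phase_eq fun m => ?_)
  set d : a → ℂ := fun x => if x = m then Complex.I else 1
  have hd : diagonal d ∈ unitaryGroup a ℂ := diagonal_mem_unitaryGroup fun x => by
    by_cases hx : x = m <;> simp [d, hx]
  have h := congrFun₂ (hM _ hd).eq (i, j) (k, l)
  rw [diagonal_kronecker_diagonal, diagonal_mul, mul_diagonal, mul_comm] at h
  exact mul_left_cancel₀ hne h

lemma apply_perm_of_forall_commute_kronecker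
    (hM : ∀ U ∈ unitaryGroup a ℂ, Commute (U ⊗ₖ U) M) (σ : Perm a) (i j k l : a) :
    M (σ i, σ j) (σ k, σ l) = M (i, j) (k, l) := by
  have h := congrFun₂ (hM _ (permMatrix_mem_unitaryGroup σ)).eq (i, j) (σ k, σ l)
  rw [kronecker_permMatrix, PEquiv.toMatrix_toPEquiv_mul, PEquiv.mul_toMatrix_toPEquiv] at h
  simpa using h

lemma eq_zero_of_forall_commute_kronecker_diagonal [Nontrivial a] {δ : ℂ}
    (h : ∀ U ∈ unitaryGroup a ℂ,
      Commute (U ⊗ₖ U) (diagonal fun p : a × a => if p.1 = p.2 then δ else 0)) :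
    δ = 0 := by
  obtain ⟨a₀, a₁, h01⟩ := exists_pair_ne a
  -- The `((a₀, a₀), (a₀, a₁))` entry of the commutator with `H ⊗ H` is `δ * H a₀ a₀ * H a₀ a₁`.
  set v : a → ℂ := Pi.single a₀ (3 / 5) + Pi.single a₁ (4 / 5)
  have hv : star v ⬝ᵥ v = 1 := by norm_num [v, dotProduct_add, h01, h01.symm]
  have h := congrFun₂ (h _ (one_sub_two_vecMulVec_mem_unitaryGroup hv)).eq (a₀, a₀) (a₀, a₁)
  rw [mul_diagonal, diagonal_mul] at h
  simp only [kroneckerMap_apply, Matrix.sub_apply, Matrix.smul_apply, vecMulVec_apply] at h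
  norm_num [v, h01] at h
  exact h

lemma exists_eq_smul_one_add_smul_swapM_add_diagonal_of_forall_commute_kronecker [Nontrivial a]
    (hM : ∀ U ∈ unitaryGroup a ℂ, Commute (U ⊗ₖ U) M) :
    ∃ α β δ : ℂ,
      M = α • 1 + β • swapM a + diagonal fun p : a × a => if p.1 = p.2 then δ else 0 := by
  obtain ⟨a₀, a₁, h01⟩ := exists_pair_ne a
  have hpair {i j : a} (hij : i ≠ j) :
      M (i, j) (i, j) = M (a₀, a₁) (a₀, a₁) ∧ M (i, j) (j, i) = M (a₀, a₁) (a₁, a₀) := by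
    obtain ⟨σ, hσ⟩ := Perm.exists_extending_pair ![a₀, a₁] ![i, j]
      (injective_pair_iff_ne.mpr h01) (injective_pair_iff_ne.mpr hij)
    have h0 : σ a₀ = i := hσ 0
    have h1 : σ a₁ = j := hσ 1
    constructor
    · simpa [h0, h1] using apply_perm_of_forall_commute_kronecker hM σ a₀ a₁ a₀ a₁
    · simpa [h0, h1] using apply_perm_of_forall_commute_kronecker hM σ a₀ a₁ a₁ a₀
  have hdiag (i : a) : M (i, i) (i, i) = M (a₀, a₀) (a₀, a₀) := by
    simpa using apply_perm_of_forall_commute_kronecker hM (swap a₀ i) a₀ a₀ a₀ a₀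
  refine ⟨M (a₀, a₁) (a₀, a₁), M (a₀, a₁) (a₁, a₀),
    M (a₀, a₀) (a₀, a₀) - M (a₀, a₁) (a₀, a₁) - M (a₀, a₁) (a₁, a₀), ?_⟩
  ext ⟨i, j⟩ ⟨k, l⟩
  by_cases hijkl : (k = i ∧ l = j) ∨ (k = j ∧ l = i)
  · rcases hijkl with ⟨rfl, rfl⟩ | ⟨rfl, rfl⟩ <;> obtain rfl | hkl := eq_or_ne k l
    · simp [hdiag, one_apply, swapM]
    · simp [hpair hkl, hkl, one_apply, swapM]
    · simp [hdiag, one_apply, swapM]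
    · simp [(hpair hkl.symm).2, hkl, hkl.symm, one_apply, swapM]
  · have h₁ : ¬(i = k ∧ j = l) := fun h => hijkl (.inl ⟨h.1.symm, h.2.symm⟩)
    have h₂ : ¬(i = l ∧ j = k) := fun h => hijkl (.inr ⟨h.2.symm, h.1.symm⟩)
    simp [apply_eq_zero_of_forall_commute_kronecker hM hijkl, swapM, one_apply, h₁, h₂]

lemma eq_smul_trace_one_of_subsingleton {ι : Type*} [Fintype ι] [DecidableEq ι] [Subsingleton ι]
    (N : Matrix ι ι ℂ) : N = N.trace • 1 := by
  ext i j
  obtain rfl := Subsingleton.elim i j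
  simp [trace, Fintype.sum_subsingleton _ i]

theorem exists_eq_smul_one_add_smul_swapM_of_forall_commute_kronecker
    (hM : ∀ U ∈ unitaryGroup a ℂ, Commute (U ⊗ₖ U) M) :
    ∃ α β : ℂ, M = α • 1 + β • swapM a := by
  rcases subsingleton_or_nontrivial a with ha | ha
  · exact ⟨M.trace, 0, by simpa using eq_smul_trace_one_of_subsingleton M⟩
  obtain ⟨α, β, δ, hαβδ⟩ :=
    exists_eq_smul_one_add_smul_swapM_add_diagonal_of_forall_commute_kronecker hM
  have hδ : δ = 0 := by
    refine eq_zero_of_forall_commute_kronecker_diagonal (a := a) fun U hU => ?_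
    rw [eq_sub_of_add_eq' hαβδ.symm]
    exact (hM U hU).sub_right (((Commute.one_right _).smul_right α).add_right
      ((commute_swapM_kronecker_self U).symm.smul_right β))
  exact ⟨α, β, by simpa [hδ] using hαβδ⟩

end Commutant

section MatrixIntegral
variable {ι G : Type*} [MeasurableSpace G] {μ : Measure G} {f : G → Matrix ι ι ℂ}

lemma mul_mInt_mul [Fintype ι] (hf : ∀ i j, Integrable (fun x => f x i j) μ)
    (A B : Matrix ι ι ℂ) :
    A * mInt μ f * B = mInt μ fun x => A * f x * B := by
  ext i j
  simp only [mInt, mul_apply, of_apply, Finset.sum_mul]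
  have hint (k l : ι) : Integrable (fun x => A i l * f x l k * B k j) μ :=
    ((hf l k).const_mul _).mul_const _
  rw [integral_finsetSum _ fun k _ => integrable_finsetSum _ fun l _ => hint k l]
  refine Finset.sum_congr rfl fun k _ => ?_
  rw [integral_finsetSum _ fun l _ => hint k l]
  refine Finset.sum_congr rfl fun l _ => ?_
  rw [integral_mul_const, integral_const_mul]

lemma trace_mInt [Fintype ι] (hf : ∀ i j, Integrable (fun x => f x i j) μ) :
    (mInt μ f).trace = ∫ x, (f x).trace ∂μ := by
  simp only [trace, diag_apply, mInt, of_apply]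
  exact (integral_finsetSum _ fun i _ => hf i i).symm

lemma mInt_comp_mul_left [Group G] (hμ : ∀ g : G, MeasurePreserving (g * ·) μ μ) (g : G) :
    mInt μ (fun x => f (g * x)) = mInt μ f := by
  let e : G ≃ᵐ G := ⟨Equiv.mulLeft g, (hμ g).measurable, (hμ g⁻¹).measurable⟩
  ext i j
  exact (hμ g).integral_comp' (f := e) (fun x => f x i j)

end MatrixIntegral

instance {m n : Type*} [Fintype m] [Fintype n] : BorelSpace (Matrix m n ℂ) :=
  inferInstanceAs (BorelSpace (m → n → ℂ))

instance {ι : Type*} [Fintype ι] [DecidableEq ι] : CompactSpace (unitaryGroup ι ℂ) := by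
  have hclosed : IsClosed (unitaryGroup ι ℂ : Set (Matrix ι ι ℂ)) := isClosed_unitary
  have hbox :
      IsCompact (Set.univ.pi fun _ : ι => Set.univ.pi fun _ : ι => Metric.closedBall (0 : ℂ) 1) :=
    isCompact_univ_pi fun _ => isCompact_univ_pi fun _ => isCompact_closedBall 0 1
  refine isCompact_iff_compactSpace.mp (hbox.of_isClosed_subset hclosed fun U hU => ?_)
  simpa using entry_norm_bound_of_unitary hU

lemma Continuous.matrix_kronecker {X R l m n p : Type*} [TopologicalSpace X] [TopologicalSpace R]
    [Mul R] [ContinuousMul R] {A : X → Matrix l m R} {B : X → Matrix n p R} (hA : Continuous A)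
    (hB : Continuous B) : Continuous fun x => A x ⊗ₖ B x :=
  continuous_matrix fun _ _ => (hA.matrix_elem _ _).mul (hB.matrix_elem _ _)

section Twirl
variable {a : Type*} [Fintype a] [DecidableEq a]

def twirl (μ : Measure (unitaryGroup a ℂ)) (Y : Matrix (a × a) (a × a) ℂ) :
    Matrix (a × a) (a × a) ℂ :=
  mInt μ fun U => ((U : Matrix a a ℂ) ⊗ₖ (U : Matrix a a ℂ)) * Y *
    ((U : Matrix a a ℂ) ⊗ₖ (U : Matrix a a ℂ))ᴴ

lemma integrable_kronecker_conj_apply (μ : Measure (unitaryGroup a ℂ)) [IsFiniteMeasure μ]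
    (Y : Matrix (a × a) (a × a) ℂ) (p q : a × a) :
    Integrable (fun U : unitaryGroup a ℂ => (((U : Matrix a a ℂ) ⊗ₖ (U : Matrix a a ℂ)) * Y *
      ((U : Matrix a a ℂ) ⊗ₖ (U : Matrix a a ℂ))ᴴ) p q) μ := by
  have hU : Continuous fun U : unitaryGroup a ℂ => (U : Matrix a a ℂ) := continuous_subtype_val
  have hW := hU.matrix_kronecker hU
  have : Continuous fun U : unitaryGroup a ℂ => (((U : Matrix a a ℂ) ⊗ₖ (U : Matrix a a ℂ)) * Y *
      ((U : Matrix a a ℂ) ⊗ₖ (U : Matrix a a ℂ))ᴴ) p q :=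
    ((hW.matrix_mul continuous_const).matrix_mul hW.matrix_conjTranspose).matrix_elem p q
  exact this.integrable_of_hasCompactSupport (HasCompactSupport.of_compactSpace _)

variable {μ : Measure (unitaryGroup a ℂ)}

lemma commute_kronecker_twirl [IsFiniteMeasure μ]
    (hμ : ∀ V : unitaryGroup a ℂ, MeasurePreserving (V * ·) μ μ) (Y : Matrix (a × a) (a × a) ℂ)
    (V : unitaryGroup a ℂ) :
    Commute ((V : Matrix a a ℂ) ⊗ₖ (V : Matrix a a ℂ)) (twirl μ Y) := by
  rw [commute_unitary_iff_star_right_conjugate (kronecker_mem_unitary V.2 V.2),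
    star_eq_conjTranspose, twirl, mul_mInt_mul (integrable_kronecker_conj_apply μ Y)]
  convert mInt_comp_mul_left hμ V with U
  rw [Submonoid.coe_mul, mul_kronecker_mul, conjTranspose_mul]
  simp only [Matrix.mul_assoc]

lemma trace_twirl [IsProbabilityMeasure μ] (Y : Matrix (a × a) (a × a) ℂ) :
    (twirl μ Y).trace = Y.trace := by
  have h (U : unitaryGroup a ℂ) : (((U : Matrix a a ℂ) ⊗ₖ (U : Matrix a a ℂ)) * Y *
      ((U : Matrix a a ℂ) ⊗ₖ (U : Matrix a a ℂ))ᴴ).trace = Y.trace := by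
    rw [trace_mul_cycle, ← star_eq_conjTranspose,
      Unitary.star_mul_self_of_mem (kronecker_mem_unitary U.2 U.2), Matrix.one_mul]
  simp [twirl, trace_mInt (integrable_kronecker_conj_apply μ Y), h]

lemma twirl_mul_swapM [IsFiniteMeasure μ] (Y : Matrix (a × a) (a × a) ℂ) :
    twirl μ Y * swapM a = twirl μ (Y * swapM a) := by
  rw [← Matrix.one_mul (twirl μ Y), twirl, mul_mInt_mul (integrable_kronecker_conj_apply μ Y),
    twirl]
  congr 1 with U
  rw [Matrix.one_mul, conjTranspose_kronecker, Matrix.mul_assoc _ _ (swapM a),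
    ← (commute_swapM_kronecker_self _).eq]
  simp only [Matrix.mul_assoc]

end Twirl

theorem haar_average_twirl_general {a : Type*} [Fintype a] [DecidableEq a]
    (μ : MeasureTheory.Measure (Matrix.unitaryGroup a ℂ)) [MeasureTheory.IsProbabilityMeasure μ]
    (hinv : ∀ V : Matrix.unitaryGroup a ℂ,
      MeasureTheory.MeasurePreserving (fun U => V * U) μ μ)
    (Y : Matrix (a × a) (a × a) ℂ) :
    ∃ α β : ℂ,
      mInt μ (fun U => ((U : Matrix a a ℂ) ⊗ₖ (U : Matrix a a ℂ)) * Y *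
          (((U : Matrix a a ℂ) ⊗ₖ (U : Matrix a a ℂ))ᴴ)) =
        α • (1 : Matrix (a × a) (a × a) ℂ) + β • swapM a ∧
      α * (Fintype.card a : ℂ) ^ 2 + β * (Fintype.card a : ℂ) = Y.trace ∧
      α * (Fintype.card a : ℂ) + β * (Fintype.card a : ℂ) ^ 2 = (Y * swapM a).trace := by
  obtain ⟨α, β, hαβ⟩ := exists_eq_smul_one_add_smul_swapM_of_forall_commute_kronecker
    fun U hU => commute_kronecker_twirl hinv Y ⟨U, hU⟩
  refine ⟨α, β, hαβ, ?_, ?_⟩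
  · rw [← trace_twirl (μ := μ) Y, hαβ]
    simp only [trace_add, trace_smul, trace_one, trace_swapM, Fintype.card_prod, smul_eq_mul]
    push_cast
    ring
  · rw [← trace_twirl (μ := μ) (Y * swapM a), ← twirl_mul_swapM, hαβ, add_mul, smul_mul,
      smul_mul, Matrix.one_mul, swapM_mul_swapM]
    simp only [trace_add, trace_smul, trace_one, trace_swapM, Fintype.card_prod, smul_eq_mul]
    push_cast
    ring

/-- Averaging `U ⊗ U` conjugation over the Haar (probability, left-invariant)
measure on the unitary group of a `d`-dimensional space sends any `Y` to `α • 1 + β • F`,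
with `α d² + β d = Tr[Y]` and `α d + β d² = Tr[Y F]`. -/
theorem haar_average_twirl {a : Type*} [Fintype a] [DecidableEq a]
    (hd : 1 ≤ Fintype.card a)
    (μ : MeasureTheory.Measure (Matrix.unitaryGroup a ℂ)) [MeasureTheory.IsProbabilityMeasure μ]
    (hinv : ∀ V : Matrix.unitaryGroup a ℂ,
      MeasureTheory.MeasurePreserving (fun U => V * U) μ μ)
    (Y : Matrix (a × a) (a × a) ℂ) :
    ∃ α β : ℂ,
      mInt μ (fun U => ((U : Matrix a a ℂ) ⊗ₖ (U : Matrix a a ℂ)) * Y *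
          (((U : Matrix a a ℂ) ⊗ₖ (U : Matrix a a ℂ))ᴴ)) =
        α • (1 : Matrix (a × a) (a × a) ℂ) + β • swapM a ∧
      α * (Fintype.card a : ℂ) ^ 2 + β * (Fintype.card a : ℂ) = Y.trace ∧
      α * (Fintype.card a : ℂ) + β * (Fintype.card a : ℂ) ^ 2 = (Y * swapM a).trace :=
  haar_average_twirl_general μ hinv Y

end
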